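/- Let d ≥ 2 and let H be a d-uniform simple hypergraph such that any two distinct edges with nonempty intersection meet in exactly d − 1 vertices. Let x be a simplicial vertex of H and S an edge of H containing x. If a family of edges S is a self disjoint set in H \ S, then S is a self disjoint set in H. -/

import Mathlib

variable {V : Type*} [DecidableEq V] [Fintype V]

/-- The union of a family of edges. -/
def unionEdges (M : Finset (Finset V)) : Finset V := M.biUnion id

/-- `E` is the edge set of a simple hypergraph: every edge has at least two
vertices and no edge is contained in another distinct edge. -/
def IsSimpleHypergraph (E : Finset (Finset V)) : Prop :=
  (∀ S ∈ E, 2 ≤ S.card) ∧ ∀ S ∈ E, ∀ T ∈ E, S ⊆ T → S = T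

/-- A family `M` of edges of `E` is a semi-induced matching if no edge of `E`
outside `M` is contained in the union of the members of `M`. -/
def IsSemiInducedMatching (E M : Finset (Finset V)) : Prop :=
  M ⊆ E ∧ ∀ S ∈ E, S ∉ M → ¬ S ⊆ unionEdges M

/-- An induced matching is a semi-induced matching whose edges are pairwise disjoint. -/
def IsInducedMatching (E M : Finset (Finset V)) : Prop :=
  IsSemiInducedMatching E M ∧ ∀ S ∈ M, ∀ T ∈ M, S ≠ T → Disjoint S T

/-- A self semi-induced matching is a semi-induced matching in which no member
is contained in the union of the other members. -/
def IsSelfSemiInducedMatching (E M : Finset (Finset V)) : Prop :=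
  IsSemiInducedMatching E M ∧ ∀ S ∈ M, ¬ S ⊆ unionEdges (M.erase S)

/-- A self-contained semi-induced matching. -/
def IsSelfContainedSemiInducedMatching (E M : Finset (Finset V)) : Prop :=
  M ⊆ E ∧
  (∀ S ∈ E, S ∉ M → ¬ S ⊆ unionEdges M ∨ ∃ T ∈ M, T ⊆ S ∪ unionEdges (M.erase T)) ∧
  ∀ S ∈ M, ¬ S ⊆ unionEdges (M.erase S)

/-- A self disjoint set of edges. -/
def IsSelfDisjointSet (E M : Finset (Finset V)) : Prop :=
  M ⊆ E ∧ (∀ S ∈ M, ¬ S ⊆ unionEdges (M.erase S)) ∧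
  ∃ M₀ ⊆ M, IsInducedMatching E M₀ ∧
    ∀ S ∈ M, S ∉ M₀ → ∃ T ∈ M₀, (S \ T).card = 1

/-- A self semi-disjoint set of edges. -/
def IsSelfSemiDisjointSet (E M : Finset (Finset V)) : Prop :=
  M ⊆ E ∧ (∀ S ∈ M, ¬ S ⊆ unionEdges (M.erase S)) ∧
  ∃ M₀ ⊆ M, IsSemiInducedMatching E M₀ ∧
    ∀ S ∈ M, S ∉ M₀ → ∃ T ∈ M₀, (S \ T).card = 1

/-- The closed neighborhood `N[x]` of a vertex. -/
def closedNbhd (E : Finset (Finset V)) (x : V) : Finset V :=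
  insert x ((E.filter fun S => x ∈ S).biUnion id)

/-- A simplicial vertex of a `d`-uniform hypergraph: every `d`-subset of `N[x]`
is an edge. -/
def IsSimplicialVertex (E : Finset (Finset V)) (d : ℕ) (x : V) : Prop :=
  ∀ T ⊆ closedNbhd E x, T.card = d → T ∈ E

/-- `N(S)`, the union of `T \ S` over all edges `T` meeting `S`. -/
def edgeNbhd (E : Finset (Finset V)) (S : Finset V) : Finset V :=
  (E.filter fun T => (T ∩ S).Nonempty).biUnion fun T => T \ S

/-!
It suffices to show that `S` is not covered by the induced matching `M₀` witnessing that `M`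
is self disjoint in `H \ S`; then `M₀` is still an induced matching in `H`. If `S` were covered,
take `T ∈ M₀` through `x` and a vertex `y ∈ S \ T` (distinct edges of equal size). The set
`(T \ {x}) ∪ {y}` lies in `N[x]` and has `d` elements, so it is an edge since `x` is simplicial;
it avoids `x`, hence differs from `S`, and it is covered by `M₀`. So it belongs to `M₀`, yet it
meets `T` without being `T`.
-/

open Finset

section

variable {α : Type*} [DecidableEq α] {E M : Finset (Finset α)}

theorem mem_unionEdges {v : α} :
    v ∈ unionEdges M ↔ ∃ T ∈ M, v ∈ T := by
  simp [unionEdges]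

theorem subset_unionEdges {T : Finset α} (hT : T ∈ M) :
    T ⊆ unionEdges M :=
  fun _ hv => mem_unionEdges.2 ⟨T, hT, hv⟩

theorem subset_closedNbhd {T : Finset α} {x : α} (hT : T ∈ E)
    (hx : x ∈ T) : T ⊆ closedNbhd E x :=
  fun _ hv => mem_insert_of_mem (mem_biUnion.2 ⟨T, mem_filter.2 ⟨hT, hx⟩, hv⟩)

theorem IsInducedMatching.of_erase {S : Finset α}
    (hM : IsInducedMatching (E.erase S) M) (hS : ¬ S ⊆ unionEdges M) :
    IsInducedMatching E M := by
  obtain ⟨⟨hME, hcover⟩, hdisj⟩ := hM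
  refine ⟨⟨hME.trans (erase_subset S E), fun A hA hAM hAU => ?_⟩, hdisj⟩
  by_cases hAS : A = S
  · exact hS (hAS ▸ hAU)
  · exact hcover A (mem_erase.2 ⟨hAS, hA⟩) hAM hAU

theorem IsSimplicialVertex.insert_erase_mem {d : ℕ} (hUnif : ∀ T ∈ E, T.card = d) {x y : α}
    (hx : IsSimplicialVertex E d x) {T : Finset α} (hT : T ∈ E) (hxT : x ∈ T)
    (hy : y ∈ closedNbhd E x) (hyT : y ∉ T) : insert y (T.erase x) ∈ E := by
  refine hx _ (insert_subset hy ((erase_subset x T).trans (subset_closedNbhd hT hxT))) ?_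
  rw [card_insert_of_notMem fun h => hyT (mem_of_mem_erase h), card_erase_add_one hxT, hUnif T hT]

theorem not_subset_unionEdges_of_isSimplicialVertex {d : ℕ}
    (hd : 2 ≤ d) (hUnif : ∀ T ∈ E, T.card = d) {x : α} (hx : IsSimplicialVertex E d x)
    {S : Finset α} (hS : S ∈ E) (hxS : x ∈ S) (hM : IsInducedMatching (E.erase S) M) :
    ¬ S ⊆ unionEdges M := by
  intro hSU
  obtain ⟨T, hTM, hxT⟩ := mem_unionEdges.1 (hSU hxS)
  obtain ⟨hTS, hTE⟩ := mem_erase.1 (hM.1.1 hTM)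
  obtain ⟨y, hyS, hyT⟩ : ∃ y ∈ S, y ∉ T := not_subset.1 fun hST =>
    hTS (eq_of_subset_of_card_le hST (by rw [hUnif S hS, hUnif T hTE])).symm
  set A := insert y (T.erase x)
  have hAE : A ∈ E := hx.insert_erase_mem hUnif hTE hxT (subset_closedNbhd hS hxS hyS) hyT
  have hAS : A ≠ S := by
    rintro rfl
    rcases mem_insert.1 hxS with hxy | hx'
    · exact hyT (hxy ▸ hxT)
    · exact notMem_erase x T hx'
  have hAU : A ⊆ unionEdges M :=
    insert_subset (hSU hyS) ((erase_subset x T).trans (subset_unionEdges hTM))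
  by_cases hAM : A ∈ M
  · have hAT : A ≠ T := fun h => hyT (h ▸ mem_insert_self y _)
    obtain ⟨z, hz⟩ : (T.erase x).Nonempty := by
      rw [← card_pos, card_erase_of_mem hxT, hUnif T hTE]
      omega
    exact disjoint_left.1 (hM.2 A hAM T hTM hAT) (mem_insert_of_mem hz) (mem_of_mem_erase hz)
  · exact hM.1.2 A (mem_erase.2 ⟨hAS, hAE⟩) hAM hAU

end

theorem selfDisjointSet_of_eraseEdge_general
    (E : Finset (Finset V)) (d : ℕ) (hd : 2 ≤ d)
    (hUnif : ∀ S ∈ E, S.card = d)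
    (x : V) (hx : IsSimplicialVertex E d x)
    (S : Finset V) (hS : S ∈ E) (hxS : x ∈ S)
    (M : Finset (Finset V)) (hM : IsSelfDisjointSet (E.erase S) M) :
    IsSelfDisjointSet E M := by
  obtain ⟨hME, hself, M₀, hM₀M, hM₀, hnear⟩ := hM
  have hS₀ := not_subset_unionEdges_of_isSimplicialVertex hd hUnif hx hS hxS hM₀
  exact ⟨hME.trans (erase_subset S E), hself, M₀, hM₀M, hM₀.of_erase hS₀, hnear⟩

/-- in a `d`-uniform simple hypergraph in which any two distinct
meeting edges intersect in exactly `d - 1` vertices, if `x` is a simplicial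
vertex and `S` an edge containing `x`, then every self disjoint set in `H \ S`
is a self disjoint set in `H`. -/
theorem selfDisjointSet_of_eraseEdge
    (E : Finset (Finset V)) (d : ℕ) (hd : 2 ≤ d)
    (hH : IsSimpleHypergraph E) (hUnif : ∀ S ∈ E, S.card = d)
    (hInt : ∀ S ∈ E, ∀ T ∈ E, S ≠ T → (S ∩ T).Nonempty → (S ∩ T).card = d - 1)
    (x : V) (hx : IsSimplicialVertex E d x)
    (S : Finset V) (hS : S ∈ E) (hxS : x ∈ S)
    (M : Finset (Finset V)) (hM : IsSelfDisjointSet (E.erase S) M) :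
    IsSelfDisjointSet E M :=
  selfDisjointSet_of_eraseEdge_general E d hd hUnif x hx S hS hxS M hM
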